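/- arXiv:2509.25184 — 2 statements merged into one kernel-verified Lean document; each statement's English description precedes it below -/
import Mathlib

section
/- Let θ be a Bernoulli(π) random variable with π ∈ (0,1). Let r_i and r_j be {0,1}-valued random variables that are conditionally independent given θ, with t_i = Pr(r_i=1|θ=1), f_i = Pr(r_i=1|θ=0), t_j = Pr(r_j=1|θ=1), f_j = Pr(r_j=1|θ=0). Let r_i' and r_j' be independent random variables with r_i' distributed as the marginal of r_i and r_j' as the marginal of r_j (and independent of each other). Then Pr(r_i = r_j) − Pr(r_i' = r_j') = 2·π·(1−π)·(t_i − f_i)·(t_j − f_j). -/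
open MeasureTheory

/-! Split the event `r_i = r_j` into `r_i = r_j = 1` and `r_i = r_j = 0`, and each of these further
according to `θ`. Conditional independence gives the four joint probabilities, whose sum minus the
product-form baseline is a polynomial identity in `π, t_i, f_i, t_j, f_j`. -/

section

variable {Ω : Type*} [MeasurableSpace Ω] {μ : Measure Ω} [IsFiniteMeasure μ]

lemma measureReal_setOf_eq_bool {f g : Ω → Bool} (hf : Measurable f) (hg : Measurable g) :
    μ.real {ω | f ω = g ω}
      = μ.real {ω | f ω = true ∧ g ω = true} + μ.real {ω | f ω = false ∧ g ω = false} := by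
  have hsplit : {ω | f ω = g ω}
      = {ω | f ω = true ∧ g ω = true} ∪ {ω | f ω = false ∧ g ω = false} := by
    ext ω
    simp only [Set.mem_ofPred_eq, Set.mem_union]
    cases f ω <;> cases g ω <;> simp
  have hdisj : Disjoint {ω | f ω = true ∧ g ω = true} {ω | f ω = false ∧ g ω = false} :=
    Set.disjoint_left.2 fun ω h h' => by simp_all
  rw [hsplit, measureReal_union hdisj
    ((hf (measurableSet_singleton false)).inter (hg (measurableSet_singleton false)))]

lemma measureReal_setOf_and_bool (p : Ω → Prop) {θ : Ω → Bool} (hθ : Measurable θ) :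
    μ.real {ω | p ω} = μ.real {ω | p ω ∧ θ ω = true} + μ.real {ω | p ω ∧ θ ω = false} := by
  have hfalse : {ω | p ω ∧ θ ω = false} = {ω | p ω} \ {ω | θ ω = true} := by
    ext ω
    simp
  rw [hfalse]
  exact (measureReal_inter_add_sdiff (hθ (measurableSet_singleton true))).symm

end

theorem stmt_2_general {Ω : Type*} [MeasurableSpace Ω] (μ : Measure Ω) [IsProbabilityMeasure μ]
    (θ ri rj ri' rj' : Ω → Bool)
    (hθm : Measurable θ) (hrim : Measurable ri) (hrjm : Measurable rj)
    (hrim' : Measurable ri') (hrjm' : Measurable rj')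
    (π ti fi tj fj : ℝ)
    -- conditional independence of r_i and r_j given θ, expressed through joint probabilities
    (h11t : (μ {ω | ri ω = true ∧ rj ω = true ∧ θ ω = true}).toReal = ti * tj * π)
    (h00t : (μ {ω | ri ω = false ∧ rj ω = false ∧ θ ω = true}).toReal = (1 - ti) * (1 - tj) * π)
    (h11f : (μ {ω | ri ω = true ∧ rj ω = true ∧ θ ω = false}).toReal = fi * fj * (1 - π))
    (h00f : (μ {ω | ri ω = false ∧ rj ω = false ∧ θ ω = false}).toReal
      = (1 - fi) * (1 - fj) * (1 - π))
    -- r_i' and r_j' are independent, with the marginal distributions of r_i and r_j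
    (h11' : (μ {ω | ri' ω = true ∧ rj' ω = true}).toReal
      = (π * ti + (1 - π) * fi) * (π * tj + (1 - π) * fj))
    (h00' : (μ {ω | ri' ω = false ∧ rj' ω = false}).toReal
      = (1 - (π * ti + (1 - π) * fi)) * (1 - (π * tj + (1 - π) * fj))) :
    (μ {ω | ri ω = rj ω}).toReal - (μ {ω | ri' ω = rj' ω}).toReal
      = 2 * π * (1 - π) * (ti - fi) * (tj - fj) := by
  simp only [← measureReal_def] at *
  have h11 := measureReal_setOf_and_bool (μ := μ) (fun ω => ri ω = true ∧ rj ω = true) hθm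
  have h00 := measureReal_setOf_and_bool (μ := μ) (fun ω => ri ω = false ∧ rj ω = false) hθm
  simp only [and_assoc] at h11 h00
  rw [measureReal_setOf_eq_bool hrim hrjm, measureReal_setOf_eq_bool hrim' hrjm', h11, h00,
    h11t, h00t, h11f, h00f, h11', h00']
  ring

/-- Single-claim expected pairwise score: on-task agreement probability minus the
independent (off-task) baseline equals 2π(1−π)(t_i−f_i)(t_j−f_j). -/
theorem stmt_2 {Ω : Type*} [MeasurableSpace Ω] (μ : Measure Ω) [IsProbabilityMeasure μ]
    (θ ri rj ri' rj' : Ω → Bool)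
    (hθm : Measurable θ) (hrim : Measurable ri) (hrjm : Measurable rj)
    (hrim' : Measurable ri') (hrjm' : Measurable rj')
    (π ti fi tj fj : ℝ) (hπ : π ∈ Set.Ioo (0:ℝ) 1)
    (hθ : (μ {ω | θ ω = true}).toReal = π)
    -- conditional independence of r_i and r_j given θ, expressed through joint probabilities
    (h11t : (μ {ω | ri ω = true ∧ rj ω = true ∧ θ ω = true}).toReal = ti * tj * π)
    (h00t : (μ {ω | ri ω = false ∧ rj ω = false ∧ θ ω = true}).toReal = (1 - ti) * (1 - tj) * π)
    (h11f : (μ {ω | ri ω = true ∧ rj ω = true ∧ θ ω = false}).toReal = fi * fj * (1 - π))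
    (h00f : (μ {ω | ri ω = false ∧ rj ω = false ∧ θ ω = false}).toReal
      = (1 - fi) * (1 - fj) * (1 - π))
    -- r_i' and r_j' are independent, with the marginal distributions of r_i and r_j
    (h11' : (μ {ω | ri' ω = true ∧ rj' ω = true}).toReal
      = (π * ti + (1 - π) * fi) * (π * tj + (1 - π) * fj))
    (h00' : (μ {ω | ri' ω = false ∧ rj' ω = false}).toReal
      = (1 - (π * ti + (1 - π) * fi)) * (1 - (π * tj + (1 - π) * fj))) :
    (μ {ω | ri ω = rj ω}).toReal - (μ {ω | ri' ω = rj' ω}).toReal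
      = 2 * π * (1 - π) * (ti - fi) * (tj - fj) :=
  stmt_2_general μ θ ri rj ri' rj' hθm hrim hrjm hrim' hrjm' π ti fi tj fj h11t h00t h11f h00f h11'
    h00'
end

section
/- Suppose the inclusion probability is affine in the score: Pr(include) = a + b·ŵ with a, b ≥ 0, and the expected score of a policy with informativeness η is E[ŵ(η)] = α·η·Γ̄ where Γ̄ ≥ γ > 0. Let the truthful policy have informativeness η* > 0 and any deviation have informativeness η' with η' < η* if it exerts effort, and η' = 0 if not. If v·b·α·γ·η* > c, then the truthful policy's expected utility v·(a + b·E[ŵ(η*)]) − c strictly exceeds that of every other policy: it exceeds effortful deviations by at least v·b·α·γ·(η* − η') > 0 and effortless deviations by at least v·b·α·γ·η* − c > 0. -/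
theorem affineUtility_sub_ge {v a b α γ Γ η₁ η₂ : ℝ} (hcoef : 0 ≤ v * b * α) (hΓ : γ ≤ Γ)
    (hη : η₂ ≤ η₁) :
    v * b * α * γ * (η₁ - η₂) ≤ v * (a + b * (α * η₁ * Γ)) - v * (a + b * (α * η₂ * Γ)) :=
  calc v * b * α * γ * (η₁ - η₂)
      ≤ v * b * α * Γ * (η₁ - η₂) := by gcongr
    _ = v * (a + b * (α * η₁ * Γ)) - v * (a + b * (α * η₂ * Γ)) := by ring

theorem stmt_12_general (v c a b α γ Γ ηstar : ℝ)
    (hγ : 0 < γ) (hΓ : γ ≤ Γ)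
    (hc : 0 < c) (hηstar : 0 < ηstar)
    (hcond : c < v * b * α * γ * ηstar) :
    (∀ η' : ℝ, 0 ≤ η' → η' < ηstar →
      (v * (a + b * (α * ηstar * Γ)) - c) - (v * (a + b * (α * η' * Γ)) - c)
        ≥ v * b * α * γ * (ηstar - η') ∧ 0 < v * b * α * γ * (ηstar - η')) ∧
    ((v * (a + b * (α * ηstar * Γ)) - c) - (v * (a + b * (α * 0 * Γ)))
        ≥ v * b * α * γ * ηstar - c ∧ 0 < v * b * α * γ * ηstar - c) := by
  have hκ : 0 < v * b * α * γ := pos_of_mul_pos_left (hc.trans hcond) hηstar.le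
  have hcoef : 0 ≤ v * b * α := (pos_of_mul_pos_left hκ hγ.le).le
  refine ⟨fun η' _ hη' => ⟨?_, mul_pos hκ (sub_pos.mpr hη')⟩, ?_, sub_pos.mpr hcond⟩
  · have := affineUtility_sub_ge (a := a) hcoef hΓ hη'.le
    linarith
  · have := affineUtility_sub_ge (a := a) hcoef hΓ hηstar.le
    rw [sub_zero] at this
    linarith

/-- Affine-inclusion strong truthfulness: with inclusion probability a + b·ŵ and expected
score α·η·Γ̄ (Γ̄ ≥ γ > 0), if v·b·α·γ·η* > c then the truthful policy strictly dominates: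
it beats effortful deviations (η' < η*) by at least v·b·α·γ·(η* − η') > 0 and effortless
deviations (η' = 0, no effort cost) by at least v·b·α·γ·η* − c > 0. -/
theorem stmt_12 (v c a b α γ Γ ηstar : ℝ)
    (ha : 0 ≤ a) (hb : 0 ≤ b) (hα : 0 < α) (hγ : 0 < γ) (hΓ : γ ≤ Γ)
    (hv : 0 < v) (hc : 0 < c) (hηstar : 0 < ηstar)
    (hcond : c < v * b * α * γ * ηstar) :
    (∀ η' : ℝ, 0 ≤ η' → η' < ηstar →
      (v * (a + b * (α * ηstar * Γ)) - c) - (v * (a + b * (α * η' * Γ)) - c)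
        ≥ v * b * α * γ * (ηstar - η') ∧ 0 < v * b * α * γ * (ηstar - η')) ∧
    ((v * (a + b * (α * ηstar * Γ)) - c) - (v * (a + b * (α * 0 * Γ)))
        ≥ v * b * α * γ * ηstar - c ∧ 0 < v * b * α * γ * ηstar - c) :=
  stmt_12_general v c a b α γ Γ ηstar hγ hΓ hc hηstar hcond
end
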